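/- arXiv:2402.18617 — 3 statements merged into one kernel-verified Lean document; each statement's English description precedes it below -/
import Mathlib

section
/- If π(τ) is an ε₁-Nash equilibrium strategy (exploitability at most ε₁), |r(π̂,π)| ≤ M for all π̂, π, and trajectories τ' with representation distance d(f(τ), f(τ')) < δ satisfy ∫_Π |τ'(π) − τ(π)|dπ < αδ, then the δ-exploited level satisfies EL_δ(τ) < ε₁ + αδM. -/
open Finset

/-- Proposition 2 of the paper.  Trajectories `Tr` carry distributions `τdist`
over the finite strategy set `P`; `f` is a representation map into a metric space;
`phat τ'` is the opponent strategy of trajectory `τ'`; `R τ' = r(π̂(τ'), π(τ'))`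
is the reward of the mixed strategy of `τ'`.  If `π(τ)` is an `ε₁`-Nash equilibrium,
any strategy can exploit another by at most `M` (`|r| ≤ M`), and trajectories whose
representations are `δ`-close to `f τ` have distributions within `α·δ` in `L¹`
distance from that of `τ`, then the `δ`-exploited level satisfies
`EL_δ(τ) < ε₁ + α·δ·M`. -/
theorem exploited_level_bound
    {Tr : Type*} [Fintype Tr] {P : Type*} [Fintype P] {O : Type*}
    {X : Type*} [PseudoMetricSpace X]
    (f : Tr → X) (τ : Tr)
    (τdist : Tr → P → ℝ)
    (hd0 : ∀ τ' π, 0 ≤ τdist τ' π) (hd1 : ∀ τ', ∑ π, τdist τ' π = 1)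
    (r : O → P → ℝ) (phat : Tr → O)
    (M ε₁ α δ : ℝ) (hM : 0 < M) (hδ : 0 < δ)
    (hbd : ∀ o π, |r o π| ≤ M)
    (hNash : ∀ o, -ε₁ ≤ ∑ π, τdist τ π * r o π)
    (hclose : ∀ τ', dist (f τ) (f τ') < δ →
      ∑ π, |τdist τ' π - τdist τ π| < α * δ)
    (R : Tr → ℝ) (hR : ∀ τ', R τ' = ∑ π, τdist τ' π * r (phat τ') π)
    (Nb : Finset Tr) (hNb : Nb = Finset.univ.filter (fun τ' => dist (f τ) (f τ') < δ))
    (D : Finset Tr) (hD : D = Nb.filter (fun τ' => R τ' ≤ 0))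
    (hne : D.Nonempty) :
    (∑ τ' ∈ Nb, max (-(R τ')) 0) / (D.card : ℝ) < ε₁ + α * δ * M := by
  have key : ∀ τ' ∈ Nb, -R τ' < ε₁ + α * δ * M := by
    intro τ' hτ'
    rw [hNb, Finset.mem_filter] at hτ'
    have hcl := hclose τ' hτ'.2
    have h2 : ∑ π, (τdist τ π - τdist τ' π) * r (phat τ') π
        ≤ ∑ π, |τdist τ' π - τdist τ π| * M := by
      apply Finset.sum_le_sum
      intro i _
      calc (τdist τ i - τdist τ' i) * r (phat τ') i
          ≤ |(τdist τ i - τdist τ' i) * r (phat τ') i| := le_abs_self _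
        _ = |τdist τ i - τdist τ' i| * |r (phat τ') i| := abs_mul _ _
        _ ≤ |τdist τ i - τdist τ' i| * M :=
            mul_le_mul_of_nonneg_left (hbd _ _) (abs_nonneg _)
        _ = |τdist τ' i - τdist τ i| * M := by rw [abs_sub_comm]
    have h3 : ∑ π, |τdist τ' π - τdist τ π| * M < α * δ * M := by
      rw [← Finset.sum_mul]
      exact mul_lt_mul_of_pos_right hcl hM
    have h1 : ∑ π, (τdist τ π - τdist τ' π) * r (phat τ') π
        = ∑ π, τdist τ π * r (phat τ') π - ∑ π, τdist τ' π * r (phat τ') π := by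
      rw [← Finset.sum_sub_distrib]
      exact Finset.sum_congr rfl fun i _ => by ring
    have hN := hNash (phat τ')
    rw [hR]
    linarith [h2, h3, h1.symm ▸ h2]
  have hDsub : D ⊆ Nb := hD ▸ Finset.filter_subset _ _
  have hpos : 0 < ε₁ + α * δ * M := by
    obtain ⟨τ₀, hτ₀⟩ := hne
    have hmem := hτ₀
    rw [hD, Finset.mem_filter] at hmem
    have := key τ₀ hmem.1
    linarith [hmem.2]
  have hsum_eq : ∑ τ' ∈ Nb, max (-(R τ')) 0 = ∑ τ' ∈ D, max (-(R τ')) 0 := by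
    refine (Finset.sum_subset hDsub fun x hx hxD => ?_).symm
    have : ¬ R x ≤ 0 := by
      intro h
      exact hxD (by rw [hD, Finset.mem_filter]; exact ⟨hx, h⟩)
    exact max_eq_right (by linarith)
  have hsum_lt : ∑ τ' ∈ D, max (-(R τ')) 0 < D.card * (ε₁ + α * δ * M) := by
    calc ∑ τ' ∈ D, max (-(R τ')) 0 < ∑ _τ' ∈ D, (ε₁ + α * δ * M) := by
          apply Finset.sum_lt_sum_of_nonempty hne
          intro i hi
          exact max_lt (key i (hDsub hi)) hpos
      _ = D.card * (ε₁ + α * δ * M) := by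
          rw [Finset.sum_const, nsmul_eq_mul]
  have hcard : (0:ℝ) < D.card := by exact_mod_cast hne.card_pos
  rw [div_lt_iff₀ hcard, hsum_eq]
  linarith [hsum_lt]
end

section
/- Let g: Π → ℝ be a bounded measurable function on a probability space (Π, μ) with μ({π : g(π) ≤ 0}) > 0, and for δ > 0 define EL_δ(τ) as the ratio of the μ-integral of g⁻(π') := max(−g(π'), 0)·1_{g(π')≤0} over the δ-ball {π' : d(f(τ'), f(τ)) < δ} to the μ-measure of {π' in that ball : g(π') ≤ 0}. If g and the ball structure are such that EL_δ is given by averaging over shrinking neighborhoods on which the induced strategy distributions converge (in L¹) to τ, then lim_{δ→0⁺} EL_δ(τ) = EL(τ) := E_μ[−g(π) | g(π) ≤ 0]. -/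
open MeasureTheory Filter

lemma aux_bound {St : Type*} [MeasurableSpace St] (μ : Measure St)
    (h : St → ℝ) (C : ℝ) (hC : 0 ≤ C) (hh : Measurable h) (hb : ∀ π, |h π| ≤ C)
    (S : Set St) (v v₀ : St → ℝ) (hv : Integrable v μ) (hv0 : Integrable v₀ μ) :
    |(∫ π in S, h π * v π ∂μ) - ∫ π in S, h π * v₀ π ∂μ|
      ≤ C * ∫ π, |v π - v₀ π| ∂μ := by
  have hiv : Integrable (fun π => h π * v π) (μ.restrict S) :=
    ((hv.restrict (s := S)).bdd_mul (c := C) hh.aestronglyMeasurable (Eventually.of_forall fun π => by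
      rw [Real.norm_eq_abs]; exact hb π))
  have hiv0 : Integrable (fun π => h π * v₀ π) (μ.restrict S) :=
    ((hv0.restrict (s := S)).bdd_mul (c := C) hh.aestronglyMeasurable (Eventually.of_forall fun π => by
      rw [Real.norm_eq_abs]; exact hb π))
  rw [← integral_sub hiv hiv0]
  have h1 : |∫ π in S, (h π * v π - h π * v₀ π) ∂μ|
      ≤ ∫ π in S, |h π * v π - h π * v₀ π| ∂μ := by
    simpa [Real.norm_eq_abs] using
      norm_integral_le_integral_norm (fun π => h π * v π - h π * v₀ π)
        (μ := μ.restrict S)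
  refine h1.trans ?_
  have hsub : Integrable (fun π => |v π - v₀ π|) μ := (hv.sub hv0).abs
  have h2 : ∫ π in S, |h π * v π - h π * v₀ π| ∂μ
      ≤ ∫ π in S, C * |v π - v₀ π| ∂μ := by
    refine integral_mono (hiv.sub hiv0).abs ((hsub.restrict (s := S)).const_mul C) ?_
    intro π
    simp only [← mul_sub, abs_mul]
    exact mul_le_mul_of_nonneg_right (hb π) (abs_nonneg _)
  refine h2.trans ?_
  rw [integral_const_mul]
  have h3 : ∫ π in S, |v π - v₀ π| ∂μ ≤ ∫ π, |v π - v₀ π| ∂μ :=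
    setIntegral_le_integral hsub (Eventually.of_forall fun π => abs_nonneg _)
  exact mul_le_mul_of_nonneg_left h3 hC

lemma aux_tendsto {St : Type*} [MeasurableSpace St] (μ : Measure St)
    (h : St → ℝ) (C : ℝ) (hC : 0 ≤ C) (hh : Measurable h) (hb : ∀ π, |h π| ≤ C)
    (S : Set St) (w : ℝ → St → ℝ) (w₀ : St → ℝ)
    (hint : ∀ δ, Integrable (w δ) μ) (hint0 : Integrable w₀ μ)
    (hL1 : Tendsto (fun δ => ∫ π, |w δ π - w₀ π| ∂μ) (nhdsWithin 0 (Set.Ioi 0))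
      (nhds 0)) :
    Tendsto (fun δ => ∫ π in S, h π * w δ π ∂μ) (nhdsWithin 0 (Set.Ioi 0))
      (nhds (∫ π in S, h π * w₀ π ∂μ)) := by
  rw [tendsto_iff_dist_tendsto_zero]
  have hb2 : Tendsto (fun δ => C * ∫ π, |w δ π - w₀ π| ∂μ)
      (nhdsWithin 0 (Set.Ioi 0)) (nhds 0) := by
    simpa using hL1.const_mul C
  refine squeeze_zero (fun δ => dist_nonneg) (fun δ => ?_) hb2
  rw [Real.dist_eq]
  exact aux_bound μ h C hC hh hb S (w δ) w₀ (hint δ) hint0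

/-- Convergence of the `δ`-exploited level to the exploited level.  `g π = r(π, π(τ))`
is a bounded measurable reward on the strategy space `(Π, μ)`.  The averaging over
the shrinking representation `δ`-ball around `f τ` induces, for each `δ > 0`, a
strategy density `w δ` (nonnegative, integrating to `1`), and the hypothesis that
these induced strategy distributions converge in `L¹` to the distribution `w₀` of
`τ` is `∫ |w δ − w₀| dμ → 0` as `δ → 0⁺`.  The `δ`-exploited level is the
conditional average `EL_δ(τ) = (∫_{g ≤ 0} (−g)·w δ dμ)/(∫_{g ≤ 0} w δ dμ)` and the
exploited level is `EL(τ) = E_μ[−g | g ≤ 0] = (∫_{g ≤ 0} (−g)·w₀ dμ)/(∫_{g ≤ 0} w₀ dμ)`,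
where the conditioning event has positive probability.  Then
`lim_{δ→0⁺} EL_δ(τ) = EL(τ)`. -/
theorem exploited_level_limit
    {St : Type*} [MeasurableSpace St] (μ : Measure St) [IsProbabilityMeasure μ]
    (g : St → ℝ) (M : ℝ) (hg : Measurable g) (hbd : ∀ π, |g π| ≤ M)
    (w : ℝ → St → ℝ) (w₀ : St → ℝ)
    (hwm : ∀ δ, Measurable (w δ)) (hw0m : Measurable w₀)
    (hw0 : ∀ δ π, 0 ≤ w δ π) (hw00 : ∀ π, 0 ≤ w₀ π)
    (hw1 : ∀ δ, 0 < δ → ∫ π, w δ π ∂μ = 1) (hw01 : ∫ π, w₀ π ∂μ = 1)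
    (hint : ∀ δ, Integrable (w δ) μ) (hint0 : Integrable w₀ μ)
    (hL1 : Tendsto (fun δ => ∫ π, |w δ π - w₀ π| ∂μ) (nhdsWithin 0 (Set.Ioi 0))
      (nhds 0))
    (hpos : 0 < ∫ π in {π | g π ≤ 0}, w₀ π ∂μ) :
    Tendsto
      (fun δ => (∫ π in {π | g π ≤ 0}, (-(g π)) * w δ π ∂μ) /
        (∫ π in {π | g π ≤ 0}, w δ π ∂μ))
      (nhdsWithin 0 (Set.Ioi 0))
      (nhds ((∫ π in {π | g π ≤ 0}, (-(g π)) * w₀ π ∂μ) /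
        (∫ π in {π | g π ≤ 0}, w₀ π ∂μ))) := by
  set S : Set St := {π | g π ≤ 0}
  have hnum : Tendsto (fun δ => ∫ π in S, (-(g π)) * w δ π ∂μ)
      (nhdsWithin 0 (Set.Ioi 0)) (nhds (∫ π in S, (-(g π)) * w₀ π ∂μ)) :=
    aux_tendsto μ (fun π => -(g π)) |M| (abs_nonneg M) hg.neg
      (fun π => by rw [abs_neg]; exact (hbd π).trans (le_abs_self M))
      S w w₀ hint hint0 hL1
  have hden : Tendsto (fun δ => ∫ π in S, w δ π ∂μ)
      (nhdsWithin 0 (Set.Ioi 0)) (nhds (∫ π in S, w₀ π ∂μ)) := by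
    have := aux_tendsto μ (fun _ => (1 : ℝ)) 1 zero_le_one measurable_const
      (fun π => by norm_num) S w w₀ hint hint0 hL1
    simpa using this
  exact hnum.div hden (ne_of_gt hpos)
end

section
/- In the n-pure-strategy toy model, if σ satisfies r(π_j, σ) = r_j < 0 for exactly one j and r(π_i, σ) = r_i > 0 for all i ≠ j, then the probability (under the uniform distribution on the standard (n−1)-simplex of opponent mixtures a) that the opponent exploits σ, i.e., P[Σᵢ aᵢrᵢ ≤ 0], equals Π_{i≠j} (−r_j)/(r_i − r_j). -/
open MeasureTheory Finset

/-!
Write `d i = (-r j) / (r i - r j) ∈ (0, 1]` for the barycentric coordinate of `v_i` on the edge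
`[e_j, e_i]`. In the chart `b` the exploited region `{L ≤ 0}` is the corner simplex
`{b ≥ 0, Σ b i / d i ≤ 1}` with intercepts `d`, which lies inside `S` because `d ≤ 1`. It is the
image of `S` under the diagonal map `b ↦ d * b`, so its volume is `∏ d i` times that of `S`.
-/

section CornerSimplex

variable {ι : Type*} [Fintype ι]

/-- The simplex with vertices `0` and `d i • Pi.single i 1`. -/
def cornerSimplex (d : ι → ℝ) : Set (ι → ℝ) :=
  {x | (∀ i, 0 ≤ x i) ∧ ∑ i, x i / d i ≤ 1}

theorem cornerSimplex_one :
    cornerSimplex (1 : ι → ℝ) = {x | (∀ i, 0 ≤ x i) ∧ ∑ i, x i ≤ 1} := by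
  simp [cornerSimplex]

theorem cornerSimplex_subset_one {d : ι → ℝ} (hd₀ : ∀ i, 0 < d i) (hd₁ : ∀ i, d i ≤ 1) :
    cornerSimplex d ⊆ cornerSimplex 1 := by
  rintro x ⟨hx₀, hx⟩
  refine ⟨hx₀, le_trans (sum_le_sum fun i _ => ?_) hx⟩
  simpa using div_le_div_of_nonneg_left (hx₀ i) (hd₀ i) (hd₁ i)

theorem sep_cornerSimplex_one {d : ι → ℝ} (hd₀ : ∀ i, 0 < d i) (hd₁ : ∀ i, d i ≤ 1) :
    {x ∈ cornerSimplex 1 | ∑ i, x i / d i ≤ 1} = cornerSimplex d := by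
  ext x
  exact ⟨fun ⟨⟨hx₀, _⟩, hx⟩ => ⟨hx₀, hx⟩,
    fun hx => ⟨cornerSimplex_subset_one hd₀ hd₁ hx, hx.2⟩⟩

theorem image_mul_cornerSimplex_one {d : ι → ℝ} (hd : ∀ i, 0 < d i) :
    (d * ·) '' cornerSimplex 1 = cornerSimplex d := by
  ext x
  constructor
  · rintro ⟨y, ⟨hy₀, hy⟩, rfl⟩
    refine ⟨fun i => mul_nonneg (hd i).le (hy₀ i), ?_⟩
    simpa [mul_div_cancel_left₀ _ (hd _).ne'] using hy
  · rintro ⟨hx₀, hx⟩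
    refine ⟨fun i => x i / d i, ⟨fun i => div_nonneg (hx₀ i) (hd i).le, by simpa using hx⟩, ?_⟩
    ext i
    exact mul_div_cancel₀ _ (hd i).ne'

theorem volume_image_mul (d : ι → ℝ) (s : Set (ι → ℝ)) :
    volume ((d * ·) '' s) = ENNReal.ofReal |∏ i, d i| * volume s := by
  classical
  have hT : (d * ·) = ⇑(Matrix.toLin' (Matrix.diagonal d)) := by
    ext x i
    simp [Matrix.mulVec_diagonal]
  rw [hT, Measure.addHaar_image_linearMap, LinearMap.det_toLin', Matrix.det_diagonal]

theorem volume_cornerSimplex {d : ι → ℝ} (hd : ∀ i, 0 < d i) :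
    volume (cornerSimplex d) = ENNReal.ofReal (∏ i, d i) * volume (cornerSimplex (1 : ι → ℝ)) := by
  rw [← image_mul_cornerSimplex_one hd, volume_image_mul,
    abs_of_pos (prod_pos fun i _ => hd i)]

end CornerSimplex

theorem affine_payoff_nonpos_iff {ι : Type*} [Fintype ι] {c : ℝ} (hc : c < 0) (s b : ι → ℝ) :
    (1 - ∑ i, b i) * c + ∑ i, b i * s i ≤ 0 ↔ ∑ i, b i / (-c / (s i - c)) ≤ 1 := by
  have hsum : ∑ i, b i / (-c / (s i - c)) = (∑ i, b i * s i - (∑ i, b i) * c) / -c := by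
    simp only [div_div_eq_mul_div, ← sum_div, mul_sub, sum_sub_distrib, sum_mul]
  rw [hsum, div_le_one (neg_pos.mpr hc)]
  constructor <;> intro h <;> linarith

/-- Probability that the opponent exploits `σ` in the `(n+1)`-pure-strategy toy
model.  Payoffs satisfy `r j < 0` for exactly one `j` and `r i > 0` for `i ≠ j`.
The opponent mixture `a`, uniform on the standard `n`-dimensional simplex, is
parametrized by the chart `b : Fin n → ℝ` (weights of the strategies other than
`j`, with `1 - Σ b` the weight of `π_j`), so the simplex becomes
`S = {b : 0 ≤ b, Σ b ≤ 1}` and `r(π, σ) = L b`.  Then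
`P[Σᵢ aᵢ rᵢ ≤ 0] = vol{b ∈ S : L b ≤ 0}/vol S = Π_{i≠j} (−r j)/(r i − r j)`. -/
theorem toy_model_exploitation_probability
    (n : ℕ) (r : Fin (n + 1) → ℝ) (j : Fin (n + 1))
    (hj : r j < 0) (hi : ∀ i, i ≠ j → 0 < r i) :
    let L : (Fin n → ℝ) → ℝ :=
      fun b => (1 - ∑ i, b i) * r j + ∑ i, b i * r (j.succAbove i)
    let S : Set (Fin n → ℝ) := {b | (∀ i, 0 ≤ b i) ∧ (∑ i, b i) ≤ 1}
    (volume {b ∈ S | L b ≤ 0}).toReal =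
      (∏ i : Fin n, (-(r j)) / (r (j.succAbove i) - r j)) * (volume S).toReal := by
  intro L S
  set d : Fin n → ℝ := fun i => -r j / (r (j.succAbove i) - r j)
  have hgap : ∀ i, -r j < r (j.succAbove i) - r j := fun i => by
    linarith [hi _ (j.succAbove_ne i)]
  have hd₀ : ∀ i, 0 < d i := fun i => div_pos (neg_pos.mpr hj) (by linarith [hgap i])
  have hd₁ : ∀ i, d i ≤ 1 := fun i => (div_le_one (by linarith [hgap i])).mpr (hgap i).le
  have hS : S = cornerSimplex 1 := cornerSimplex_one.symm
  have hexploit : {b ∈ S | L b ≤ 0} = cornerSimplex d := by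
    simp only [L, affine_payoff_nonpos_iff hj, hS]
    exact sep_cornerSimplex_one hd₀ hd₁
  rw [hexploit, hS, volume_cornerSimplex hd₀, ENNReal.toReal_mul,
    ENNReal.toReal_ofReal (prod_pos fun i _ => hd₀ i).le]
end
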